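/- For every x ∈ [-α,1]ⁿ, there exists a probability distribution λ on Dⁿ (D = {-α,0,1}) with marginals x (i.e., Σ_{a∈Dⁿ} λ(a)·a = x) whose support forms a chain in Dⁿ with respect to the componentwise order induced by 0 ≺ 1, 0 ≺ -α. -/

import Mathlib

open Finset

/-- The three-element domain `D = {-α, 0, 1}`, abstractly. -/
inductive D3 : Type
  | neg : D3
  | zero : D3
  | one : D3
deriving DecidableEq

instance : Fintype D3 :=
  ⟨{D3.neg, D3.zero, D3.one}, by rintro (_ | _ | _) <;> simp⟩

namespace D3

/-- The embedding of `D3` into `ℝ` sending `neg ↦ -α`, `zero ↦ 0`, `one ↦ 1`. -/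
def emb (α : ℝ) : D3 → ℝ
  | neg => -α
  | zero => 0
  | one => 1

/-- The partial order `0 ≺ 1`, `0 ≺ -α`, with `1` and `-α` incomparable. -/
instance : PartialOrder D3 where
  le x y := x = y ∨ x = zero
  le_refl x := Or.inl rfl
  le_trans x y z hxy hyz := by
    rcases hxy with rfl | rfl
    · exact hyz
    · exact Or.inr rfl
  le_antisymm x y hxy hyx := by
    rcases hxy with rfl | rfl
    · rfl
    · rcases hyx with rfl | rfl <;> rfl

/-- `∧₀` : `1 ∧₀ (-α) = (-α) ∧₀ 1 = 0`, and min w.r.t. `≺` otherwise. -/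
def meet0 (x y : D3) : D3 := if x = y then x else zero

/-- `∨₀` : `1 ∨₀ (-α) = (-α) ∨₀ 1 = 0`, and max w.r.t. `≺` otherwise. -/
def join0 (x y : D3) : D3 :=
  if x = y then x else if x = zero then y else if y = zero then x else zero

/-- `∨₁` : `1 ∨₁ (-α) = (-α) ∨₁ 1 = 1`, and max w.r.t. `≺` otherwise. -/
def join1 (x y : D3) : D3 :=
  if x = y then x else if x = zero then y else if y = zero then x else one

end D3

/-- Componentwise `∧₀` on `Dⁿ`. -/
def vmeet0 {n : ℕ} (a b : Fin n → D3) : Fin n → D3 := fun i => D3.meet0 (a i) (b i)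

/-- Componentwise `∨₀` on `Dⁿ`. -/
def vjoin0 {n : ℕ} (a b : Fin n → D3) : Fin n → D3 := fun i => D3.join0 (a i) (b i)

/-- Componentwise `∨₁` on `Dⁿ`. -/
def vjoin1 {n : ℕ} (a b : Fin n → D3) : Fin n → D3 := fun i => D3.join1 (a i) (b i)

/-- `lam` is a probability distribution on `Dⁿ`. -/
def IsDist (n : ℕ) (lam : (Fin n → D3) → ℝ) : Prop :=
  (∀ a, 0 ≤ lam a ∧ lam a ≤ 1) ∧ ∑ a : Fin n → D3, lam a = 1

/-- `lam` has marginal vector `x`, i.e. `Σ_a lam(a)·a = x` in `ℝⁿ`. -/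
def HasMarginal (α : ℝ) (n : ℕ) (lam : (Fin n → D3) → ℝ) (x : Fin n → ℝ) : Prop :=
  ∀ i, ∑ a : Fin n → D3, lam a * D3.emb α (a i) = x i

/-- The support of `lam` forms a chain w.r.t. the componentwise order on `Dⁿ`. -/
def ChainSupp (n : ℕ) (lam : (Fin n → D3) → ℝ) : Prop :=
  ∀ a b : Fin n → D3, lam a ≠ 0 → lam b ≠ 0 → a ≤ b ∨ b ≤ a

/-- The box `[-α,1]ⁿ`. -/
def Box (α : ℝ) (n : ℕ) : Set (Fin n → ℝ) := {x | ∀ i, x i ∈ Set.Icc (-α) 1}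

/-- `f : Dⁿ → ℝ` is α-bisubmodular. -/
def AlphaBisub (α : ℝ) (n : ℕ) (f : (Fin n → D3) → ℝ) : Prop :=
  ∀ a b : Fin n → D3,
    f (vmeet0 a b) + α * f (vjoin0 a b) + (1 - α) * f (vjoin1 a b) ≤ f a + f b

/-- Number of zero coordinates. -/
def zc {n : ℕ} (c : Fin n → D3) : ℕ := (Finset.univ.filter fun i => c i = D3.zero).card

/-- The convex closure `f⁻(x)`. -/
noncomputable def cClos (α : ℝ) (n : ℕ) (f : (Fin n → D3) → ℝ) (x : Fin n → ℝ) : ℝ :=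
  sInf {y | ∃ lam, IsDist n lam ∧ HasMarginal α n lam x ∧ y = ∑ a : Fin n → D3, lam a * f a}

/-!
Write `xᵢ = tᵢ · dᵢ` with `tᵢ ∈ [0, 1]` and `dᵢ ∈ {1, -α}`. Draw `θ` uniformly from `[0, 1]`
and let `a(θ)ᵢ = dᵢ` if `θ < tᵢ` and `0` otherwise. The `i`-th coordinate of `a(θ)` has mean
`tᵢ · dᵢ = xᵢ`, and `θ ↦ a(θ)` is antitone, so the law of `a(θ)` is supported on a chain.
-/

open MeasureTheory Set

namespace D3

lemma zero_le (x : D3) : zero ≤ x := Or.inr rfl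

instance : MeasurableSpace D3 := ⊤

instance : DiscreteMeasurableSpace D3 := ⟨fun _ => trivial⟩

lemma exists_mul_emb_eq {α x : ℝ} (hx : x ∈ Icc (-α) 1) :
    ∃ d : D3, ∃ τ ∈ Icc (0 : ℝ) 1, τ * emb α d = x := by
  rcases le_or_gt 0 x with h | h
  · exact ⟨one, x, ⟨h, hx.2⟩, by simp [emb]⟩
  · have hα : 0 < α := by linarith [hx.1]
    refine ⟨neg, x / -α, ⟨div_nonneg_of_nonpos h.le (by linarith), ?_⟩,
      by simp [emb]; field_simp⟩
    rw [div_le_one_of_neg (by linarith)]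
    exact hx.1

end D3

section Law

variable {Ω : Type*} [MeasurableSpace Ω] (μ : Measure Ω) {n : ℕ} {f : Ω → Fin n → D3}

lemma isDist_law [IsProbabilityMeasure μ] (hf : Measurable f) :
    IsDist n fun a => (μ.map f).real {a} := by
  have := Measure.isProbabilityMeasure_map (μ := μ) hf.aemeasurable
  refine ⟨fun a => ⟨measureReal_nonneg, measureReal_le_one⟩, ?_⟩
  simp

lemma hasMarginal_law [IsProbabilityMeasure μ] (α : ℝ) (hf : Measurable f) :
    HasMarginal α n (fun a => (μ.map f).real {a}) fun i => ∫ ω, D3.emb α (f ω i) ∂μ := by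
  have := Measure.isProbabilityMeasure_map (μ := μ) hf.aemeasurable
  intro i
  calc ∑ a, (μ.map f).real {a} * D3.emb α (a i) = ∫ a, D3.emb α (a i) ∂(μ.map f) := by
        simp [integral_fintype .of_finite, mul_comm]
    _ = ∫ ω, D3.emb α (f ω i) ∂μ :=
        integral_map hf.aemeasurable Measurable.of_discrete.aestronglyMeasurable

lemma chainSupp_law (hf : Measurable f) (hchain : IsChain (· ≤ ·) (range f)) :
    ChainSupp n fun a => (μ.map f).real {a} := by
  have mem_range : ∀ a, (μ.map f).real {a} ≠ 0 → a ∈ range f := by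
    intro a ha
    rw [map_measureReal_apply hf (measurableSet_singleton a)] at ha
    obtain ⟨ω, hω⟩ := nonempty_of_measureReal_ne_zero ha
    exact ⟨ω, hω⟩
  intro a b ha hb
  exact hchain.total (mem_range a ha) (mem_range b hb)

end Law

section Threshold

variable {ι : Type*} (s : ι → D3) (t : ι → ℝ)

noncomputable def threshold (θ : ℝ) : ι → D3 := fun i => if θ < t i then s i else D3.zero

lemma antitone_threshold : Antitone (threshold s t) := by
  intro θ θ' h i
  by_cases h' : θ' < t i
  · simp [threshold, h', h.trans_lt h']
  · simp only [threshold, h', if_false]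
    exact D3.zero_le _

lemma measurable_threshold : Measurable (threshold s t) :=
  measurable_pi_lambda _ fun _ => Measurable.ite measurableSet_Iio measurable_const measurable_const

lemma integral_emb_threshold (α : ℝ) {i : ι} (ht : t i ∈ Icc (0 : ℝ) 1) :
    ∫ θ in Icc (0 : ℝ) 1, D3.emb α (threshold s t θ i) = t i * D3.emb α (s i) := by
  have : (fun θ => D3.emb α (threshold s t θ i)) =
      (Iio (t i)).indicator fun _ => D3.emb α (s i) := by
    ext θ
    by_cases h : θ < t i <;> simp [threshold, h, D3.emb]
  rw [this, integral_indicator_const _ measurableSet_Iio,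
    measureReal_restrict_apply measurableSet_Iio]
  have hIco : Iio (t i) ∩ Icc 0 1 = Ico 0 (t i) := by
    ext θ
    simp only [Set.mem_inter_iff, Set.mem_Iio, Set.mem_Icc, Set.mem_Ico]
    exact ⟨fun ⟨h, h0, _⟩ => ⟨h0, h⟩, fun ⟨h0, h⟩ => ⟨h, h0, h.le.trans ht.2⟩⟩
  rw [hIco, Real.volume_real_Ico_of_le ht.1, sub_zero, smul_eq_mul]

end Threshold

theorem stmt1_general (α : ℝ) (n : ℕ) (x : Fin n → ℝ)
    (hx : x ∈ Box α n) :
    ∃ lam : (Fin n → D3) → ℝ, IsDist n lam ∧ HasMarginal α n lam x ∧ ChainSupp n lam := by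
  choose s t ht hst using fun i => D3.exists_mul_emb_eq (hx i)
  set μ := volume.restrict (Icc (0 : ℝ) 1)
  have : IsProbabilityMeasure μ := ⟨by simp [μ]⟩
  have hf := measurable_threshold s t
  refine ⟨_, isDist_law μ hf, ?_, chainSupp_law μ hf (antitone_threshold s t).isChain_range⟩
  convert hasMarginal_law μ α hf using 1
  ext i
  rw [integral_emb_threshold s t α (ht i), hst i]

/-- existence of a chain-supported distribution with marginals `x`. -/
theorem stmt1 (α : ℝ) (hα : α ∈ Set.Ioc (0 : ℝ) 1) (n : ℕ) (x : Fin n → ℝ)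
    (hx : x ∈ Box α n) :
    ∃ lam : (Fin n → D3) → ℝ, IsDist n lam ∧ HasMarginal α n lam x ∧ ChainSupp n lam :=
  stmt1_general α n x hx
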